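/- arXiv:1712.04228 — 2 statements merged into one kernel-verified Lean document; each statement's English description precedes it below -/
import Mathlib

section
/- Let G be a connected claw-free finite simple graph of even order, and let P: u_1 … u_k (k ≥ 2) be a path in G that allows neither an end-extension nor a swap-extension. Then the edge u_{k−1}u_k belongs to some perfect matching of G. -/
/-- A graph is claw-free if it has no induced subgraph isomorphic to `K_{1,3}`. -/
def ClawFree {V : Type*} (G : SimpleGraph V) : Prop :=
  ¬ ∃ a b c d : V, a ≠ b ∧ a ≠ c ∧ a ≠ d ∧ b ≠ c ∧ b ≠ d ∧ c ≠ d ∧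
    G.Adj a b ∧ G.Adj a c ∧ G.Adj a d ∧ ¬ G.Adj b c ∧ ¬ G.Adj b d ∧ ¬ G.Adj c d

/-!
Let `x = u (k-2)` and `w = u (k-1)` be the last two vertices of a path with no end- and no
swap-extension. Every neighbour of `w` lies on the path, so claw-freeness at `x`, with `w` as one
leaf, makes the neighbours of `x` off the path pairwise adjacent and, when `k ≥ 3`, adjacent to
`u (k-3)`: if `u (k-3)` and `w` were adjacent, such a neighbour would give a swap-extension.
Hence every vertex of `G - x - w` next to `{x, w}` lies in the component of the rest of the path,
and `G - x - w` is connected. It is claw-free of even order, so by Sumner's theorem it has a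
perfect matching, to which `xw` is added. Sumner's theorem itself follows from the same argument
by induction on the order, applied to a longest path, which admits no extension of either kind.
-/

open SimpleGraph

theorem mapsTo_swap_sub_two_sub_one (k : ℕ) :
    Set.MapsTo (Equiv.swap (k - 2) (k - 1)) (Set.Iio k) (Set.Iio k) := by
  intro i (hi : i < k)
  show Equiv.swap (k - 2) (k - 1) i < k
  rw [Equiv.swap_apply_def]
  split_ifs <;> omega

section

variable {V : Type*} {G : SimpleGraph V}

theorem ClawFree.adj_of_not_adj (hG : ClawFree G) {a b c d : V} (hab : G.Adj a b)
    (hac : G.Adj a c) (had : G.Adj a d) (hbc : ¬G.Adj b c) (hbd : ¬G.Adj b d)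
    (hb : b ∉ ({c, d} : Set V)) (hcd : c ≠ d) : G.Adj c d := by
  by_contra h
  simp only [Set.mem_insert_iff, Set.mem_singleton_iff, not_or] at hb
  exact hG ⟨a, b, c, d, hab.ne, hac.ne, had.ne, hb.1, hb.2, hcd, hab, hac, had, hbc, hbd, h⟩

theorem ClawFree.induce (hG : ClawFree G) (s : Set V) : ClawFree (G.induce s) :=
  fun ⟨a, b, c, d, hab, hac, had, hbc, hbd, hcd, h⟩ =>
    hG ⟨a, b, c, d, Subtype.coe_injective.ne hab, Subtype.coe_injective.ne hac,
      Subtype.coe_injective.ne had, Subtype.coe_injective.ne hbc, Subtype.coe_injective.ne hbd,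
      Subtype.coe_injective.ne hcd, h⟩

structure IsPathSeq (G : SimpleGraph V) (k : ℕ) (u : ℕ → V) : Prop where
  injOn : Set.InjOn u (Set.Iio k)
  adj : ∀ i, i + 1 < k → G.Adj (u i) (u (i + 1))

namespace IsPathSeq

variable {k : ℕ} {u : ℕ → V}

theorem le_card [Finite V] (hu : IsPathSeq G k u) : k ≤ Nat.card V := by
  simpa using Nat.card_le_card_of_injective (fun i : Fin k => u i)
    fun i j h => Fin.ext (hu.injOn i.2 j.2 h)

theorem snoc (hu : IsPathSeq G k u) (hk : 1 ≤ k) {v : V} (hv : v ∉ u '' Set.Iio k)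
    (hadj : G.Adj (u (k - 1)) v) : IsPathSeq G (k + 1) (Function.update u k v) := by
  have hlt : ∀ i < k, Function.update u k v i = u i := fun i hi =>
    Function.update_of_ne hi.ne _ _
  constructor
  · intro i hi j hj h
    simp only [Set.mem_Iio, Nat.lt_succ_iff_lt_or_eq] at hi hj
    rcases hi with hi | rfl <;> rcases hj with hj | rfl
    · exact hu.injOn hi hj (by rwa [hlt i hi, hlt j hj] at h)
    · exact absurd ⟨i, hi, by simpa [hlt i hi] using h⟩ hv
    · exact absurd ⟨j, hj, by simpa [hlt j hj] using h.symm⟩ hv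
    · rfl
  · intro i hi
    rw [hlt i (by omega)]
    rcases Nat.lt_or_ge (i + 1) k with h | h
    · rw [hlt (i + 1) h]
      exact hu.adj i h
    · obtain rfl : i = k - 1 := by omega
      rw [Nat.sub_add_cancel hk, Function.update_self]
      exact hadj

theorem swap (hu : IsPathSeq G k u) (hk : 3 ≤ k) (hadj : G.Adj (u (k - 3)) (u (k - 1))) :
    IsPathSeq G k (u ∘ Equiv.swap (k - 2) (k - 1)) := by
  constructor
  · exact hu.injOn.comp (Equiv.injective _).injOn (mapsTo_swap_sub_two_sub_one k)
  · intro i hi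
    simp only [Function.comp_apply]
    rcases Nat.lt_or_ge (i + 1) (k - 2) with h | h
    · rw [Equiv.swap_apply_of_ne_of_ne (by omega) (by omega),
        Equiv.swap_apply_of_ne_of_ne (by omega) (by omega)]
      exact hu.adj i (by omega)
    · rcases (by omega : i + 1 = k - 2 ∨ i = k - 2) with h | rfl
      · rw [h, Equiv.swap_apply_left, Equiv.swap_apply_of_ne_of_ne (by omega) (by omega),
          (by omega : i = k - 3)]
        exact hadj
      · rw [(by omega : k - 2 + 1 = k - 1), Equiv.swap_apply_left, Equiv.swap_apply_right]
        simpa [(by omega : k - 2 + 1 = k - 1)] using (hu.adj (k - 2) (by omega)).symm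

theorem adj_sub_two (hu : IsPathSeq G k u) (hk : 2 ≤ k) : G.Adj (u (k - 2)) (u (k - 1)) := by
  simpa [(by omega : k - 2 + 1 = k - 1)] using hu.adj (k - 2) (by omega)

theorem componentComplMk_eq (hu : IsPathSeq G k u) {K : Set V} {m : ℕ} (hm : m ≤ k)
    (hK : ∀ i < m, u i ∉ K) {i : ℕ} (hi : i < m) :
    G.componentComplMk (hK i hi) = G.componentComplMk (hK 0 (by omega)) := by
  induction i with
  | zero => rfl
  | succ i ih =>
    exact (G.componentComplMk_eq_of_adj _ _ (hu.adj i (by omega)).symm).trans (ih (by omega))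

end IsPathSeq

/-- The last two fields say that the path has no end-extension and no swap-extension. -/
structure IsNonExtendablePath (G : SimpleGraph V) (k : ℕ) (u : ℕ → V) : Prop
    extends IsPathSeq G k u where
  two_le : 2 ≤ k
  mem_of_adj_last : ∀ v, G.Adj (u (k - 1)) v → v ∈ u '' Set.Iio k
  mem_of_adj_penult : 3 ≤ k → G.Adj (u (k - 3)) (u (k - 1)) →
    ∀ v, G.Adj (u (k - 2)) v → v ∈ u '' Set.Iio k

theorem exists_isNonExtendablePath [Finite V] {a b : V} (hab : G.Adj a b) :
    ∃ k u, IsNonExtendablePath G k u := by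
  classical
  let IsLength (m : ℕ) : Prop := ∃ u, IsPathSeq G m u
  have hlen2 : IsLength 2 := by
    have hsingle : IsPathSeq G 1 fun _ => a :=
      ⟨fun i hi j hj _ => by simp_all, fun i hi => by omega⟩
    exact ⟨_, hsingle.snoc le_rfl (by simpa using hab.ne') hab⟩
  have hcard : 2 ≤ Nat.card V := by obtain ⟨u, hu⟩ := hlen2; exact hu.le_card
  set k := Nat.findGreatest IsLength (Nat.card V)
  obtain ⟨u, hu⟩ : IsLength k := Nat.findGreatest_spec hcard hlen2
  have hk : 2 ≤ k := Nat.le_findGreatest hcard hlen2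
  have hmax : ∀ w, ¬IsPathSeq G (k + 1) w := fun w hw =>
    Nat.findGreatest_is_greatest (Nat.lt_succ_self k) hw.le_card ⟨w, hw⟩
  refine ⟨k, u, { hu with two_le := hk, mem_of_adj_last := ?_, mem_of_adj_penult := ?_ }⟩
  · intro v hv
    by_contra hvu
    exact hmax _ (hu.snoc (by omega) hvu hv)
  · intro hk3 hadj v hv
    by_contra hvu
    have hvu' : v ∉ (u ∘ Equiv.swap (k - 2) (k - 1)) '' Set.Iio k := by
      rintro ⟨i, hi, rfl⟩
      exact hvu ⟨_, mapsTo_swap_sub_two_sub_one k hi, rfl⟩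
    refine hmax _ ((hu.swap hk3 hadj).snoc (by omega) hvu' ?_)
    rwa [Function.comp_apply, Equiv.swap_apply_right]

theorem SimpleGraph.Preconnected.induce_compl_of_boundary (hG : G.Preconnected) {K : Set V}
    (hK : K.Nonempty)
    (h : ∀ ⦃a b : V⦄ (ha : a ∉ K) (hb : b ∉ K), (∃ c ∈ K, G.Adj a c) → (∃ c ∈ K, G.Adj b c) →
      G.componentComplMk ha = G.componentComplMk hb) :
    (G.induce Kᶜ).Preconnected := by
  intro y y'
  rw [← ConnectedComponent.eq]
  obtain ⟨⟨a, c⟩, ⟨ha, hya⟩, hc, hac⟩ :=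
    ComponentCompl.exists_adj_boundary_pair hG hK (G.componentComplMk y.2)
  obtain ⟨⟨b, d⟩, ⟨hb, hyb⟩, hd, hbd⟩ :=
    ComponentCompl.exists_adj_boundary_pair hG hK (G.componentComplMk y'.2)
  exact hya.symm.trans ((h ha hb ⟨c, hc, hac⟩ ⟨d, hd, hbd⟩).trans hyb)

namespace IsNonExtendablePath

variable {k : ℕ} {u : ℕ → V}

theorem adj_penult_of_adj (hP : IsNonExtendablePath G k u) {v c : V}
    (hv : v ∉ u '' Set.Iio k) (hc : c ∈ ({u (k - 2), u (k - 1)} : Set V)) (hvc : G.Adj v c) :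
    G.Adj (u (k - 2)) v := by
  rcases hc with rfl | rfl
  · exact hvc.symm
  · exact absurd (hP.mem_of_adj_last v hvc.symm) hv

theorem adj_of_adj_penult (hP : IsNonExtendablePath G k u) (hG : ClawFree G) {v v' : V}
    (hv : v ∉ u '' Set.Iio k) (hv' : v' ∉ u '' Set.Iio k)
    (hxv : G.Adj (u (k - 2)) v) (hxv' : G.Adj (u (k - 2)) v') (hne : v ≠ v') : G.Adj v v' := by
  have hk := hP.two_le
  refine hG.adj_of_not_adj (hP.adj_sub_two hk) hxv hxv'
    (fun h => hv (hP.mem_of_adj_last v h)) (fun h => hv' (hP.mem_of_adj_last v' h)) ?_ hne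
  rintro (h | h)
  · exact hv ⟨k - 1, Set.mem_Iio.2 (by omega), h⟩
  · exact hv' ⟨k - 1, Set.mem_Iio.2 (by omega), h⟩

theorem adj_sub_three_of_adj_penult (hP : IsNonExtendablePath G k u) (hG : ClawFree G)
    (hk : 3 ≤ k) {v : V} (hv : v ∉ u '' Set.Iio k) (hxv : G.Adj (u (k - 2)) v) :
    G.Adj (u (k - 3)) v := by
  by_cases hA : G.Adj (u (k - 3)) (u (k - 1))
  · exact absurd (hP.mem_of_adj_penult hk hA v hxv) hv
  have hxy : G.Adj (u (k - 2)) (u (k - 3)) := by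
    simpa [(by omega : k - 3 + 1 = k - 2)] using (hP.adj (k - 3) (by omega)).symm
  refine hG.adj_of_not_adj (hP.adj_sub_two hP.two_le) hxy hxv (fun h => hA h.symm)
    (fun h => hv (hP.mem_of_adj_last v h)) ?_ (fun h => hv ⟨k - 3, Set.mem_Iio.2 (by omega), h⟩)
  rintro (h | h)
  · exact absurd (hP.injOn (by simp; omega) (by simp; omega) h) (by omega)
  · exact hv ⟨k - 1, Set.mem_Iio.2 (by omega), h⟩

theorem preconnected_induce_compl (hP : IsNonExtendablePath G k u) (hG : ClawFree G)
    (hconn : G.Preconnected) : (G.induce ({u (k - 2), u (k - 1)} : Set V)ᶜ).Preconnected := by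
  set K : Set V := {u (k - 2), u (k - 1)}
  have hprefix : ∀ i < k - 2, u i ∉ K := by
    rintro i hi (h | h) <;> exact absurd (hP.injOn (by simp; omega) (by simp; omega) h) (by omega)
  have hon : ∀ ⦃a⦄, a ∉ K → a ∈ u '' Set.Iio k → ∃ i < k - 2, u i = a := by
    rintro a ha ⟨i, hi, rfl⟩
    refine ⟨i, ?_, rfl⟩
    by_contra hik
    obtain rfl | rfl : i = k - 2 ∨ i = k - 1 := by simp at hi; omega
    exacts [ha (Or.inl rfl), ha (Or.inr rfl)]
  refine hconn.induce_compl_of_boundary ⟨_, Or.inl rfl⟩ ?_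
  rcases Nat.lt_or_ge k 3 with hk | hk
  · have hoff : ∀ ⦃a⦄, a ∉ K → a ∉ u '' Set.Iio k := fun a ha hau => by
      obtain ⟨i, hi, -⟩ := hon ha hau
      omega
    rintro a b ha hb ⟨c, hc, hac⟩ ⟨d, hd, hbd⟩
    by_cases hab : a = b
    · subst hab; rfl
    exact G.componentComplMk_eq_of_adj ha hb <| hP.adj_of_adj_penult hG (hoff ha) (hoff hb)
      (hP.adj_penult_of_adj (hoff ha) hc hac) (hP.adj_penult_of_adj (hoff hb) hd hbd) hab
  · suffices hbase : ∀ ⦃a⦄ (ha : a ∉ K), (∃ c ∈ K, G.Adj a c) →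
        G.componentComplMk ha = G.componentComplMk (hprefix 0 (by omega)) by
      exact fun a b ha hb hac hbd => (hbase ha hac).trans (hbase hb hbd).symm
    rintro a ha ⟨c, hc, hac⟩
    by_cases hau : a ∈ u '' Set.Iio k
    · obtain ⟨i, hi, rfl⟩ := hon ha hau
      exact hP.componentComplMk_eq (Nat.sub_le k 2) hprefix hi
    · have hya := hP.adj_sub_three_of_adj_penult hG hk hau (hP.adj_penult_of_adj hau hc hac)
      exact (G.componentComplMk_eq_of_adj ha (hprefix (k - 3) (by omega)) hya.symm).trans
        (hP.componentComplMk_eq (by omega) hprefix (by omega))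

end IsNonExtendablePath

theorem SimpleGraph.Adj.exists_isPerfectMatching_of_induce_compl {x w : V} (hxw : G.Adj x w)
    {M' : (G.induce ({x, w} : Set V)ᶜ).Subgraph} (hM' : M'.IsPerfectMatching) :
    ∃ M : G.Subgraph, M.IsPerfectMatching ∧ M.Adj x w := by
  let f := Embedding.induce (G := G) ({x, w} : Set V)ᶜ
  have hedge := Subgraph.IsMatching.subgraphOfAdj hxw
  have hrest := hM'.1.map f.toHom f.injective
  refine ⟨G.subgraphOfAdj hxw ⊔ M'.map f.toHom, ⟨hedge.sup hrest ?_, ?_⟩,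
    Or.inl (subgraphOfAdj_adj_self hxw)⟩
  · rw [hedge.support_eq_verts, hrest.support_eq_verts, Set.disjoint_left]
    rintro a ha ⟨b, -, rfl⟩
    exact b.2 ha
  · intro v
    by_cases hv : v ∈ ({x, w} : Set V)
    · exact Or.inl hv
    · exact Or.inr ⟨⟨v, hv⟩, hM'.2 _, rfl⟩

theorem Nat.card_compl_pair_add_two [Finite V] {x w : V} (hxw : x ≠ w) :
    Nat.card ↥({x, w} : Set V)ᶜ + 2 = Nat.card V := by
  rw [Nat.card_coe_set_eq, ← Set.ncard_pair hxw, Set.ncard_compl_add_ncard]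

theorem ClawFree.exists_isPerfectMatching [Finite V] (hG : ClawFree G) (hconn : G.Preconnected)
    (heven : Even (Nat.card V)) : ∃ M : G.Subgraph, M.IsPerfectMatching := by
  induction hn : Nat.card V using Nat.strong_induction_on generalizing V with
  | _ n ih =>
  rcases isEmpty_or_nonempty V with hV | hV
  · exact ⟨⊥, Subgraph.isPerfectMatching_iff.2 fun v => isEmptyElim v⟩
  have : Nontrivial V := by
    rw [← Finite.one_lt_card_iff_nontrivial]
    have := Nat.card_pos (α := V)
    rcases heven with ⟨m, hm⟩
    omega
  obtain ⟨v⟩ := hV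
  obtain ⟨w, hvw⟩ := hconn.exists_adj_of_nontrivial v
  obtain ⟨k, u, hP⟩ := exists_isNonExtendablePath hvw
  have hxw : G.Adj (u (k - 2)) (u (k - 1)) := hP.adj_sub_two hP.two_le
  have hcard := Nat.card_compl_pair_add_two hxw.ne
  obtain ⟨M', hM'⟩ := ih _ (by omega) (hG.induce _) (hP.preconnected_induce_compl hG hconn)
    (by rw [← hcard] at heven; exact (Nat.even_add.1 heven).2 even_two) rfl
  exact (hxw.exists_isPerfectMatching_of_induce_compl hM').imp fun _ => And.left

end

/- The path is `u 0, u 1, …, u (k-1)` (the paper's `u_1 … u_k`); its last two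
vertices are `u (k-2)` and `u (k-1)`. -/
theorem last_edge_in_some_perfect_matching {V : Type*} [Fintype V]
    (G : SimpleGraph V) (hconn : G.Connected) (hcf : ClawFree G)
    (heven : Even (Fintype.card V))
    (k : ℕ) (hk : 2 ≤ k) (u : ℕ → V)
    (hinj : ∀ i j : ℕ, i < k → j < k → u i = u j → i = j)
    (hpath : ∀ i : ℕ, i + 1 < k → G.Adj (u i) (u (i + 1)))
    (hend : ¬ ∃ v : V, (∀ i : ℕ, i < k → v ≠ u i) ∧ G.Adj (u (k - 1)) v)
    (hswap : ¬ (3 ≤ k ∧ G.Adj (u (k - 3)) (u (k - 1)) ∧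
      ∃ v : V, (∀ i : ℕ, i < k → v ≠ u i) ∧ G.Adj (u (k - 2)) v)) :
    ∃ M : G.Subgraph, M.IsPerfectMatching ∧ M.Adj (u (k - 2)) (u (k - 1)) := by
  have hoff : ∀ v, (∀ i, i < k → v ≠ u i) ↔ v ∉ u '' Set.Iio k := fun v => by
    simp [eq_comm]
  have hP : IsNonExtendablePath G k u :=
    { injOn := fun i hi j hj => hinj i j hi hj
      adj := hpath
      two_le := hk
      mem_of_adj_last := fun v hv => by_contra fun h => hend ⟨v, (hoff v).2 h, hv⟩
      mem_of_adj_penult := fun hk3 hA v hv =>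
        by_contra fun h => hswap ⟨hk3, hA, v, (hoff v).2 h, hv⟩ }
  have hxw : G.Adj (u (k - 2)) (u (k - 1)) := hP.adj_sub_two hk
  have hcard := Nat.card_compl_pair_add_two hxw.ne
  rw [← Nat.card_eq_fintype_card, ← hcard] at heven
  obtain ⟨M', hM'⟩ := ClawFree.exists_isPerfectMatching (hcf.induce _)
    (hP.preconnected_induce_compl hcf hconn.preconnected) ((Nat.even_add.1 heven).2 even_two)
  exact hxw.exists_isPerfectMatching_of_induce_compl hM'
end

section
/- Let G be a connected claw-free finite simple graph with a unique perfect matching, let u be a simplicial vertex of G, and let G' be the graph obtained from G by adding two new vertices x and y together with the three new edges xy, xu, and yu. Then G' is connected, claw-free, and has a unique perfect matching. -/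
/-- Add two new vertices `x = inr 0` and `y = inr 1`, and the three new edges
`xy`, `xu`, `yu`. -/
def AddOp1 {V : Type*} (G : SimpleGraph V) (u : V) : SimpleGraph (V ⊕ Fin 2) :=
  SimpleGraph.fromRel fun a b =>
    match a, b with
    | Sum.inl a, Sum.inl b => G.Adj a b
    | Sum.inl a, Sum.inr _ => a = u
    | Sum.inr _, Sum.inr _ => True
    | _, _ => False

/-! The new vertices `x, y` span a triangle with `u`. The neighbourhoods of `u`, `x` and `y` in
the new graph are each covered by two cliques, `N_G(u)` (a clique as `u` is simplicial) and the
triangle, so none of them is the centre of a claw; every other vertex keeps its neighbourhood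
from `G`. In a perfect matching, `x` is matched to `y`, since otherwise both would be matched to
`u`; so perfect matchings of the new graph are exactly those of `G` plus the edge `xy`. -/

open Sum SimpleGraph

lemma Fin.fin_two_eq_rev_of_ne {i j : Fin 2} (h : i ≠ j) : j = i.rev := by
  fin_cases i <;> fin_cases j <;> simp_all

lemma Fin.fin_two_ne_rev (i : Fin 2) : i ≠ i.rev := by
  fin_cases i <;> decide

lemma clawFree_iff {V : Type*} {G : SimpleGraph V} :
    ClawFree G ↔ ∀ ⦃a b c d : V⦄, G.Adj a b → G.Adj a c → G.Adj a d →
      b ≠ c → b ≠ d → c ≠ d → G.Adj b c ∨ G.Adj b d ∨ G.Adj c d := by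
  simp only [ClawFree, not_exists]
  constructor
  · intro h a b c d hab hac had hbc hbd hcd
    by_contra! hn
    exact h a b c d ⟨hab.ne, hac.ne, had.ne, hbc, hbd, hcd, hab, hac, had, hn⟩
  · rintro h a b c d ⟨-, -, -, hbc, hbd, hcd, hab, hac, had, hn⟩
    have := h hab hac had hbc hbd hcd
    tauto

lemma SimpleGraph.adj_of_neighborSet_subset_union {V : Type*} {G : SimpleGraph V} {s t : Set V}
    (hs : G.IsClique s) (ht : G.IsClique t) {a b c d : V} (hst : G.neighborSet a ⊆ s ∪ t)
    (hab : G.Adj a b) (hac : G.Adj a c) (had : G.Adj a d) (hbc : b ≠ c) (hbd : b ≠ d)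
    (hcd : c ≠ d) : G.Adj b c ∨ G.Adj b d ∨ G.Adj c d := by
  rcases hst hab with hb | hb <;> rcases hst hac with hc | hc <;> rcases hst had with hd | hd
  all_goals first
    | exact .inl (hs hb hc hbc) | exact .inl (ht hb hc hbc)
    | exact .inr (.inl (hs hb hd hbd)) | exact .inr (.inl (ht hb hd hbd))
    | exact .inr (.inr (hs hc hd hcd)) | exact .inr (.inr (ht hc hd hcd))

section AddOp1

variable {V : Type*} {G : SimpleGraph V} {u : V}

@[simp] lemma addOp1_adj_inl_inl {a b : V} : (AddOp1 G u).Adj (inl a) (inl b) ↔ G.Adj a b := by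
  simp only [AddOp1, fromRel_adj, ne_eq, inl.injEq]
  exact ⟨fun ⟨_, h⟩ => h.elim id fun h => h.symm, fun h => ⟨h.ne, .inl h⟩⟩

@[simp] lemma addOp1_adj_inl_inr {a : V} {i : Fin 2} :
    (AddOp1 G u).Adj (inl a) (inr i) ↔ a = u := by
  simp [AddOp1]

@[simp] lemma addOp1_adj_inr_inl {a : V} {i : Fin 2} :
    (AddOp1 G u).Adj (inr i) (inl a) ↔ a = u := by
  simp [AddOp1]

@[simp] lemma addOp1_adj_inr_inr {i j : Fin 2} : (AddOp1 G u).Adj (inr i) (inr j) ↔ i ≠ j := by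
  simp [AddOp1]

variable (G u) in
def addOp1Inl : G ↪g AddOp1 G u :=
  ⟨⟨inl, inl_injective⟩, addOp1_adj_inl_inl⟩

lemma connected_addOp1 (hG : G.Preconnected) : (AddOp1 G u).Connected := by
  refine (connected_iff_exists_forall_reachable _).2 ⟨inl u, ?_⟩
  rintro (a | i)
  · exact (hG u a).map (addOp1Inl G u).toHom
  · exact (addOp1_adj_inl_inr.2 rfl).reachable

lemma isClique_addOp1_triangle : (AddOp1 G u).IsClique (insert (inl u) (Set.range inr)) := by
  rw [isClique_insert]
  refine ⟨?_, by simp⟩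
  rintro _ ⟨i, rfl⟩ _ ⟨j, rfl⟩ hij
  exact addOp1_adj_inr_inr.2 (by simpa using hij)

lemma isClique_addOp1_image_neighborSet (hu : G.IsClique (G.neighborSet u)) :
    (AddOp1 G u).IsClique (inl '' G.neighborSet u) := by
  rw [IsClique, inl_injective.injOn.pairwise_image]
  exact fun a ha b hb hab => addOp1_adj_inl_inl.2 (hu ha hb hab)

lemma neighborSet_addOp1_inl_self_subset :
    (AddOp1 G u).neighborSet (inl u) ⊆
      inl '' G.neighborSet u ∪ insert (inl u) (Set.range inr) := by
  rintro (a | i) (h : (AddOp1 G u).Adj _ _)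
  · exact .inl ⟨a, addOp1_adj_inl_inl.1 h, rfl⟩
  · exact .inr (.inr ⟨i, rfl⟩)

lemma neighborSet_addOp1_inr_subset {i : Fin 2} :
    (AddOp1 G u).neighborSet (inr i) ⊆ insert (inl u) (Set.range inr) := by
  rintro (a | j) (h : (AddOp1 G u).Adj _ _)
  · exact .inl (congrArg inl (addOp1_adj_inr_inl.1 h))
  · exact .inr ⟨j, rfl⟩

lemma neighborSet_addOp1_inl_subset {a : V} (ha : a ≠ u) :
    (AddOp1 G u).neighborSet (inl a) ⊆ Set.range inl := by
  rintro (b | i) (h : (AddOp1 G u).Adj _ _)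
  · exact ⟨b, rfl⟩
  · exact absurd (addOp1_adj_inl_inr.1 h) ha

lemma clawFree_addOp1 (hG : ClawFree G) (hu : G.IsClique (G.neighborSet u)) :
    ClawFree (AddOp1 G u) := by
  rw [clawFree_iff] at hG ⊢
  intro a b c d hab hac had hbc hbd hcd
  have two_cliques := fun hst => adj_of_neighborSet_subset_union
    (isClique_addOp1_image_neighborSet hu) isClique_addOp1_triangle hst hab hac had hbc hbd hcd
  rcases a with a | i
  · by_cases ha : a = u
    · exact two_cliques (ha ▸ neighborSet_addOp1_inl_self_subset)
    obtain ⟨b, rfl⟩ := neighborSet_addOp1_inl_subset ha hab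
    obtain ⟨c, rfl⟩ := neighborSet_addOp1_inl_subset ha hac
    obtain ⟨d, rfl⟩ := neighborSet_addOp1_inl_subset ha had
    simp only [addOp1_adj_inl_inl, ne_eq, inl.injEq] at hab hac had hbc hbd hcd ⊢
    exact hG hab hac had hbc hbd hcd
  · exact two_cliques (neighborSet_addOp1_inr_subset.trans Set.subset_union_right)

variable (u) in
def addOp1Matching (M : G.Subgraph) : (AddOp1 G u).Subgraph where
  verts := Set.univ
  Adj
    | inl a, inl b => M.Adj a b
    | inr i, inr j => i ≠ j
    | _, _ => False
  adj_sub := by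
    rintro (a | i) (b | j) h
    exacts [addOp1_adj_inl_inl.2 (M.adj_sub h), h.elim, h.elim, addOp1_adj_inr_inr.2 h]
  edge_vert _ := Set.mem_univ _
  symm := ⟨by
    rintro (a | i) (b | j) h
    exacts [M.adj_symm h, h, h, Ne.symm h]⟩

variable {M : G.Subgraph} {N : (AddOp1 G u).Subgraph}

lemma isPerfectMatching_addOp1Matching (hM : M.IsPerfectMatching) :
    (addOp1Matching u M).IsPerfectMatching := by
  rw [Subgraph.isPerfectMatching_iff] at hM ⊢
  rintro (a | i)
  · obtain ⟨b, hab, hb⟩ := hM a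
    refine ⟨inl b, hab, ?_⟩
    rintro (c | j) h
    exacts [congrArg inl (hb c h), h.elim]
  · refine ⟨inr i.rev, Fin.fin_two_ne_rev i, ?_⟩
    rintro (c | j) h
    exacts [h.elim, congrArg inr (Fin.fin_two_eq_rev_of_ne h)]

lemma SimpleGraph.Subgraph.IsPerfectMatching.adj_inr_inr_iff (hN : N.IsPerfectMatching)
    {i j : Fin 2} : N.Adj (inr i) (inr j) ↔ i ≠ j := by
  refine ⟨fun h => addOp1_adj_inr_inr.1 (N.adj_sub h), fun hij => ?_⟩
  suffices h01 : N.Adj (inr 0) (inr 1) by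
    fin_cases i <;> fin_cases j <;> simp_all [N.adj_comm]
  by_contra h01
  have partner : ∀ i : Fin 2, N.Adj (inr i) (inl u) := by
    intro i
    obtain ⟨w, hw, -⟩ := hN.1 (hN.2 (inr i))
    rcases w with a | j
    · rwa [addOp1_adj_inr_inl.1 (N.adj_sub hw)] at hw
    · have := addOp1_adj_inr_inr.1 (N.adj_sub hw)
      fin_cases i <;> fin_cases j <;> simp_all [N.adj_comm]
  simpa using hN.1.eq_of_adj_right (partner 0) (partner 1)

lemma SimpleGraph.Subgraph.IsPerfectMatching.not_adj_inl_inr (hN : N.IsPerfectMatching)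
    {a : V} {i : Fin 2} : ¬ N.Adj (inl a) (inr i) := by
  intro h
  have hi : N.Adj (inr i) (inr i.rev) := hN.adj_inr_inr_iff.2 (Fin.fin_two_ne_rev i)
  exact inl_ne_inr (hN.1.eq_of_adj_left h.symm hi)

lemma SimpleGraph.Subgraph.IsPerfectMatching.comap_addOp1Inl (hN : N.IsPerfectMatching) :
    (N.comap (addOp1Inl G u).toHom).IsPerfectMatching := by
  refine Subgraph.isPerfectMatching_iff.2 fun a => ?_
  obtain ⟨w, hw, hw_unique⟩ := Subgraph.isPerfectMatching_iff.1 hN (inl a)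
  rcases w with b | i
  · exact ⟨b, ⟨addOp1_adj_inl_inl.1 (N.adj_sub hw), hw⟩,
      fun c hc => inl_injective (hw_unique _ hc.2)⟩
  · exact absurd hw hN.not_adj_inl_inr

lemma SimpleGraph.Subgraph.IsPerfectMatching.eq_addOp1Matching_comap (hN : N.IsPerfectMatching) :
    N = addOp1Matching u (N.comap (addOp1Inl G u).toHom) := by
  ext x y
  · exact iff_of_true (hN.2 x) trivial
  rcases x with a | i <;> rcases y with b | j
  · exact ⟨fun h => ⟨addOp1_adj_inl_inl.1 (N.adj_sub h), h⟩, And.right⟩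
  · exact iff_false_intro hN.not_adj_inl_inr
  · exact iff_false_intro fun h => hN.not_adj_inl_inr h.symm
  · exact hN.adj_inr_inr_iff

lemma existsUnique_isPerfectMatching_addOp1 (hG : ∃! M : G.Subgraph, M.IsPerfectMatching) :
    ∃! N : (AddOp1 G u).Subgraph, N.IsPerfectMatching := by
  obtain ⟨M, hM, hM_unique⟩ := hG
  refine ⟨addOp1Matching u M, isPerfectMatching_addOp1Matching hM,
    fun N (hN : N.IsPerfectMatching) => ?_⟩
  rw [hN.eq_addOp1Matching_comap, hM_unique _ hN.comap_addOp1Inl]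

end AddOp1

theorem op1_preserves_connected_clawfree_unique_pm_general {V : Type*}
    (G : SimpleGraph V) (hconn : G.Connected) (hcf : ClawFree G)
    (hupm : ∃! M : G.Subgraph, M.IsPerfectMatching)
    (u : V) (hu : G.IsClique (G.neighborSet u)) :
    (AddOp1 G u).Connected ∧ ClawFree (AddOp1 G u) ∧
      ∃! M : (AddOp1 G u).Subgraph, M.IsPerfectMatching :=
  ⟨connected_addOp1 hconn.preconnected, clawFree_addOp1 hcf hu,
    existsUnique_isPerfectMatching_addOp1 hupm⟩

theorem op1_preserves_connected_clawfree_unique_pm {V : Type*} [Fintype V]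
    (G : SimpleGraph V) (hconn : G.Connected) (hcf : ClawFree G)
    (hupm : ∃! M : G.Subgraph, M.IsPerfectMatching)
    (u : V) (hu : G.IsClique (G.neighborSet u)) :
    (AddOp1 G u).Connected ∧ ClawFree (AddOp1 G u) ∧
      ∃! M : (AddOp1 G u).Subgraph, M.IsPerfectMatching :=
  op1_preserves_connected_clawfree_unique_pm_general G hconn hcf hupm u hu
end
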